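/- Let ν be a Krull valuation on K[x], μ an extension of ν to K̄[x], Q a key polynomial for ν, and a ∈ K̄ an optimizing root of Q. Then the restriction to K[x] of the truncation μ_{x−a} of μ at x−a equals the truncation ν_Q of ν at Q: for every f ∈ K[x], ν_Q(f) = μ_{x−a}(f). -/

import Mathlib

/-!
Over the algebraic closure, `μ_{x-a}` is the valuation centred at `a` with radius `γ = μ(x - a)`:
it is multiplicative, it agrees with `μ` on every polynomial whose roots `s` all satisfy
`μ(x - s) ≤ γ` (for instance `Q`, since `a` is an optimizing root), and on a polynomial `r` whose
roots all satisfy `μ(x - s) < γ` it equals `μ(r(a))`, the value of the constant Taylor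
coefficient. The key polynomial property puts every nonzero `r` with `deg r < deg Q` in the
second class: if `m ≥ 1` roots had `μ(x - s) ≥ γ`, then `(μ(r) - μ(∂_m r)) / m ≥ γ ≥ ε(Q)`.
Writing `f = r + Q g` with `deg r < deg Q`, we get `ν_Q(f) = min(ν(r), ν_Q(g) + ν(Q))`, and
since `Q(a) = 0` while `μ_{x-a}(r)` is read off at `r(a)`,
`μ_{x-a}(r + Q g) = min(μ_{x-a}(r), μ_{x-a}(Q) + μ_{x-a}(g))`; induction on `deg f` concludes.
-/

open Polynomial

variable {K : Type*} [Field K] {Γ : Type*} [AddCommGroup Γ] [LinearOrder Γ] [IsOrderedAddMonoid Γ]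

/-- The `i`-th coefficient of the `q`-expansion of `f`. -/
noncomputable def qCoeff (q f : Polynomial K) (i : ℕ) : Polynomial K :=
  f / q ^ i % q

/-- The truncation `ν_q` of `w` at `q` :
`ν_q(f) = min_i ν(f_i q^i)` over the `q`-expansion `f = Σ f_i q^i`. -/
noncomputable def trunc (w : Polynomial K → WithTop Γ) (q f : Polynomial K) : WithTop Γ :=
  (Finset.range (f.natDegree + 1)).inf fun i => w (qCoeff q f i * q ^ i)

/-- `b` is an admissible index in the definition of `ε(f)`. -/
def ValidIdx (w : Polynomial K → WithTop Γ) (f : Polynomial K) (b : ℕ) : Prop :=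
  1 ≤ b ∧ b ≤ f.natDegree ∧ w f ≠ ⊤ ∧ w (Polynomial.hasseDeriv b f) ≠ ⊤

/-- `(w(g) - w(∂_c g))/c ≤ (w(f) - w(∂_b f))/b`, written multiplicatively
(cross-multiplied) to stay inside `WithTop Γ`. -/
def RatioLE (w : Polynomial K → WithTop Γ) (g : Polynomial K) (c : ℕ)
    (f : Polynomial K) (b : ℕ) : Prop :=
  b • w g + c • w (Polynomial.hasseDeriv b f) ≤ c • w f + b • w (Polynomial.hasseDeriv c g)

/-- `f` is a generator of the support of `w`. -/
def IsGenSupp (w : Polynomial K → WithTop Γ) (f : Polynomial K) : Prop :=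
  ∀ g, w g = ⊤ ↔ f ∣ g

/-- `ε(f) ≥ ε(Q)` (for the valuation `w`), taking the conventions
`ε(f) = -∞` if `deg f = 0` (more generally, if the defining set is empty) and
`ε(f) = ∞` if `f` generates the support of `w`. -/
def EpsGE (w : Polynomial K → WithTop Γ) (f Q : Polynomial K) : Prop :=
  IsGenSupp w f ∨
    (¬ IsGenSupp w Q ∧
      ((∀ c, ¬ ValidIdx w Q c) ∨
        ∃ b, ValidIdx w f b ∧ ∀ c, ValidIdx w Q c → RatioLE w Q c f b))

/-- `Q` is a key polynomial for `w` : `Q` is monic and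
`ε(f) ≥ ε(Q)` implies `deg f ≥ deg Q`. -/
def IsKeyPoly (w : Polynomial K → WithTop Γ) (Q : Polynomial K) : Prop :=
  Q.Monic ∧ ∀ f : Polynomial K, f ≠ 0 → EpsGE w f Q → Q.natDegree ≤ f.natDegree

theorem WithTop.nsmul_ne_top {M : Type*} [AddMonoid M] {x : WithTop M} (hx : x ≠ ⊤) (n : ℕ) :
    n • x ≠ ⊤ := by
  lift x to M using hx
  exact_mod_cast WithTop.coe_ne_top

namespace AddValuation

variable {R : Type*} [CommRing R] (v : AddValuation R (WithTop Γ))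

theorem map_natCast_nonneg (n : ℕ) : 0 ≤ v n := by
  induction n with
  | zero => simp
  | succ n ih => exact Nat.cast_succ (R := R) n ▸ v.map_le_add ih v.map_one.ge

theorem map_ne_top_of_isUnit {x : R} (hx : IsUnit x) : v x ≠ ⊤ := by
  obtain ⟨u, rfl⟩ := hx
  intro htop
  have h := congrArg v u.mul_inv
  rw [v.map_mul, htop, top_add, v.map_one] at h
  exact WithTop.top_ne_coe h

theorem map_multiset_prod_map {ι : Type*} (s : Multiset ι) (f : ι → R) :
    v (s.map f).prod = (s.map fun i => v (f i)).sum := by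
  induction s using Multiset.induction_on with
  | empty => simp
  | cons i s ih => simp [v.map_mul, ih]

theorem map_eq_add_sum_roots (u : AddValuation K[X] (WithTop Γ)) {F : K[X]}
    (hF : F.Splits) : u F = u (C F.leadingCoeff) + (F.roots.map fun s => u (X - C s)).sum := by
  conv_lhs => rw [hF.eq_prod_roots]
  rw [u.map_mul, u.map_multiset_prod_map]

end AddValuation

namespace Polynomial

theorem hasseDeriv_map {L : Type*} [Field L] (φ : K →+* L) (n : ℕ) (p : K[X]) :
    (hasseDeriv n p).map φ = hasseDeriv n (p.map φ) := by
  ext k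
  simp [hasseDeriv_coeff, coeff_map]

theorem hasseDeriv_succ_mul_X_sub_C (p : K[X]) (s : K) (j : ℕ) :
    hasseDeriv (j + 1) (p * (X - C s)) = hasseDeriv (j + 1) p * (X - C s) + hasseDeriv j p := by
  rw [hasseDeriv_mul, Finset.Nat.sum_antidiagonal_succ', hasseDeriv_zero',
    Finset.sum_eq_single (j, 0)]
  · simp
  · rintro ⟨i, k⟩ hik hne
    rcases k with _ | k
    · simp_all
    · simp [hasseDeriv_X, hasseDeriv_C]
  · simp

end Polynomial

section QExpansion

theorem qCoeff_eq_divByMonic_modByMonic {q : K[X]} (hq : q.Monic) (f : K[X]) (i : ℕ) :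
    qCoeff q f i = f /ₘ q ^ i %ₘ q := by
  rw [qCoeff, divByMonic_eq_div _ (hq.pow i), modByMonic_eq_mod _ hq]

theorem qCoeff_zero_eq_modByMonic {q : K[X]} (hq : q.Monic) (f : K[X]) :
    qCoeff q f 0 = f %ₘ q := by
  rw [qCoeff_eq_divByMonic_modByMonic hq, pow_zero, divByMonic_one]

theorem divByMonic_pow_succ {q : K[X]} (hq : q.Monic) (f : K[X]) (i : ℕ) :
    f /ₘ q ^ (i + 1) = f /ₘ q /ₘ q ^ i := by
  set g := f /ₘ q
  have hdecomp : (q * (g %ₘ q ^ i) + f %ₘ q) + q ^ (i + 1) * (g /ₘ q ^ i) = f := by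
    linear_combination modByMonic_add_div f q + q * modByMonic_add_div g (q ^ i)
  have hdeg : degree (q * (g %ₘ q ^ i) + f %ₘ q) < degree (q ^ (i + 1)) := by
    refine (degree_add_le _ _).trans_lt (max_lt ?_ ?_)
    · rw [pow_succ', degree_mul, degree_mul]
      exact WithBot.add_lt_add_left (degree_ne_bot.2 hq.ne_zero)
        (degree_modByMonic_lt _ (hq.pow i))
    · exact (degree_modByMonic_lt _ hq).trans_le
        (degree_le_of_dvd (dvd_pow_self q i.succ_ne_zero) (hq.pow _).ne_zero)
  exact (div_modByMonic_unique _ _ (hq.pow (i + 1)) ⟨hdecomp, hdeg⟩).1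

theorem qCoeff_succ {q : K[X]} (hq : q.Monic) (f : K[X]) (i : ℕ) :
    qCoeff q f (i + 1) = qCoeff q (f /ₘ q) i := by
  rw [qCoeff_eq_divByMonic_modByMonic hq, qCoeff_eq_divByMonic_modByMonic hq,
    divByMonic_pow_succ hq]

theorem qCoeff_eq_zero_of_natDegree_lt {q f : K[X]} (hq : q.Monic) (hq1 : 1 ≤ q.natDegree)
    {i : ℕ} (hi : f.natDegree < i) : qCoeff q f i = 0 := by
  rw [qCoeff_eq_divByMonic_modByMonic hq, (divByMonic_eq_zero_iff (hq.pow i)).2, zero_modByMonic]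
  refine degree_le_natDegree.trans_lt ?_
  rw [degree_eq_natDegree (hq.pow i).ne_zero, hq.natDegree_pow]
  exact_mod_cast hi.trans_le (Nat.le_mul_of_pos_right i hq1)

variable (w : AddValuation K[X] (WithTop Γ))

theorem trunc_zero (q : K[X]) : trunc w q 0 = ⊤ := by
  simp [trunc, qCoeff]

theorem trunc_eq_inf_range {q f : K[X]} (hq : q.Monic) (hq1 : 1 ≤ q.natDegree) {N : ℕ}
    (hN : f.natDegree ≤ N) :
    trunc w q f = (Finset.range (N + 1)).inf fun i => w (qCoeff q f i * q ^ i) := by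
  refine le_antisymm (Finset.le_inf fun i hi => ?_)
    (Finset.inf_mono (Finset.range_subset_range.2 (by omega)))
  rcases le_or_gt i f.natDegree with hi' | hi'
  · exact Finset.inf_le (Finset.mem_range.2 (by omega))
  · simp [qCoeff_eq_zero_of_natDegree_lt hq hq1 hi']

theorem trunc_eq_min {q : K[X]} (hq : q.Monic) (hq1 : 1 ≤ q.natDegree) (f : K[X]) :
    trunc w q f = min (w (f %ₘ q)) (trunc w q (f /ₘ q) + w q) := by
  have hdiv : (f /ₘ q).natDegree ≤ f.natDegree := by
    rw [natDegree_divByMonic f hq]; omega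
  rw [trunc_eq_inf_range w hq hq1 (Nat.le_succ f.natDegree), Finset.range_add_one',
    Finset.inf_insert, Finset.inf_map, trunc_eq_inf_range w hq hq1 hdiv,
    Finset.apply_inf_eq_inf_comp_of_linearOrder (· + w q) (fun _ _ h => by dsimp only; gcongr)
      (top_add _)]
  congr 1
  · rw [qCoeff_zero_eq_modByMonic hq, pow_zero, mul_one]
  · refine Finset.inf_congr rfl fun i _ => ?_
    change w (qCoeff q f (i + 1) * q ^ (i + 1)) = w (qCoeff q (f /ₘ q) i * q ^ i) + w q
    rw [qCoeff_succ hq, pow_succ, ← mul_assoc, w.map_mul]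

end QExpansion

section TaylorTruncation

open Finset.HasAntidiagonal

variable (v : AddValuation K[X] (WithTop Γ)) (a : K)

theorem qCoeff_X_sub_C (h : K[X]) (j : ℕ) :
    qCoeff (X - C a) h j = C ((taylor a h).coeff j) := by
  induction j generalizing h with
  | zero =>
    rw [qCoeff_zero_eq_modByMonic (monic_X_sub_C a), modByMonic_X_sub_C_eq_C_eval,
      taylor_coeff_zero]
  | succ j ih =>
    rw [qCoeff_succ (monic_X_sub_C a), ih]
    have hdecomp := modByMonic_add_div h (X - C a)
    rw [modByMonic_X_sub_C_eq_C_eval] at hdecomp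
    conv_rhs => rw [← hdecomp]
    simp [taylor_mul, coeff_X_mul]

noncomputable def taylorTerm (h : K[X]) (j : ℕ) : WithTop Γ :=
  v (C ((taylor a h).coeff j) * (X - C a) ^ j)

theorem trunc_X_sub_C_eq_inf_range (h : K[X]) {N : ℕ} (hN : h.natDegree ≤ N) :
    trunc v (X - C a) h = (Finset.range (N + 1)).inf (taylorTerm v a h) := by
  simp only [trunc_eq_inf_range v (monic_X_sub_C a) (by simp) hN, qCoeff_X_sub_C]
  rfl

theorem trunc_X_sub_C_le_taylorTerm (h : K[X]) (j : ℕ) :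
    trunc v (X - C a) h ≤ taylorTerm v a h j := by
  rw [trunc_X_sub_C_eq_inf_range v a h (le_max_left h.natDegree j)]
  exact Finset.inf_le (Finset.mem_range.2 (Nat.lt_succ_of_le (le_max_right _ _)))

theorem le_trunc_X_sub_C {h : K[X]} {t : WithTop Γ} (ht : ∀ j, t ≤ taylorTerm v a h j) :
    t ≤ trunc v (X - C a) h := by
  rw [trunc_X_sub_C_eq_inf_range v a h le_rfl]
  exact Finset.le_inf fun j _ => ht j

theorem exists_taylorTerm_eq_trunc_X_sub_C (h : K[X]) :
    ∃ j, taylorTerm v a h j = trunc v (X - C a) h := by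
  obtain ⟨j, -, hj⟩ :=
    Finset.exists_mem_eq_inf _ Finset.nonempty_range_add_one (taylorTerm v a h)
  exact ⟨j, by rw [trunc_X_sub_C_eq_inf_range v a h le_rfl, hj]⟩

theorem exists_taylorTerm_eq_trunc_X_sub_C_of_lt (h : K[X]) :
    ∃ j, taylorTerm v a h j = trunc v (X - C a) h ∧
      ∀ k < j, trunc v (X - C a) h < taylorTerm v a h k := by
  classical
  have hex := exists_taylorTerm_eq_trunc_X_sub_C v a h
  exact ⟨Nat.find hex, Nat.find_spec hex, fun k hk =>
    (trunc_X_sub_C_le_taylorTerm v a h k).lt_of_ne (Ne.symm (Nat.find_min hex hk))⟩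

theorem C_taylor_mul_coeff_mul_pow (h₁ h₂ : K[X]) (j : ℕ) :
    C ((taylor a (h₁ * h₂)).coeff j) * (X - C a) ^ j =
      ∑ x ∈ antidiagonal j, (C ((taylor a h₁).coeff x.1) * (X - C a) ^ x.1) *
        (C ((taylor a h₂).coeff x.2) * (X - C a) ^ x.2) := by
  rw [taylor_mul, coeff_mul, map_sum, Finset.sum_mul]
  refine Finset.sum_congr rfl fun x hx => ?_
  rw [← mem_antidiagonal.1 hx, pow_add, C_mul]
  ring

theorem min_trunc_X_sub_C_le_add (h₁ h₂ : K[X]) :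
    min (trunc v (X - C a) h₁) (trunc v (X - C a) h₂) ≤ trunc v (X - C a) (h₁ + h₂) :=
  le_trunc_X_sub_C v a fun j => by
    rw [taylorTerm, map_add, coeff_add, C_add, add_mul]
    exact (min_le_min (trunc_X_sub_C_le_taylorTerm v a h₁ j)
      (trunc_X_sub_C_le_taylorTerm v a h₂ j)).trans (v.map_add _ _)

theorem trunc_X_sub_C_mul (h₁ h₂ : K[X]) :
    trunc v (X - C a) (h₁ * h₂) = trunc v (X - C a) h₁ + trunc v (X - C a) h₂ := by
  set t₁ := trunc v (X - C a) h₁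
  set t₂ := trunc v (X - C a) h₂
  have hge : t₁ + t₂ ≤ trunc v (X - C a) (h₁ * h₂) := le_trunc_X_sub_C v a fun j => by
    rw [taylorTerm, C_taylor_mul_coeff_mul_pow]
    exact v.map_le_sum fun x _ => by
      rw [v.map_mul]
      exact add_le_add (trunc_X_sub_C_le_taylorTerm v a h₁ x.1)
        (trunc_X_sub_C_le_taylorTerm v a h₂ x.2)
  by_cases htop : t₁ + t₂ = ⊤
  · rw [htop] at hge ⊢
    exact top_le_iff.1 hge
  obtain ⟨ht₁, ht₂⟩ := WithTop.add_ne_top.1 htop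
  obtain ⟨l₁, hl₁, hlt₁⟩ := exists_taylorTerm_eq_trunc_X_sub_C_of_lt v a h₁
  obtain ⟨l₂, hl₂, hlt₂⟩ := exists_taylorTerm_eq_trunc_X_sub_C_of_lt v a h₂
  -- Gauss's lemma: at index `l₁ + l₂` the product of the first minimising terms is strictly
  -- smaller than every other product
  have hmem : (l₁, l₂) ∈ antidiagonal (l₁ + l₂) := mem_antidiagonal.2 rfl
  have hmain : v ((C ((taylor a h₁).coeff l₁) * (X - C a) ^ l₁) *
      (C ((taylor a h₂).coeff l₂) * (X - C a) ^ l₂)) = t₁ + t₂ := by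
    rw [v.map_mul]
    exact congrArg₂ (· + ·) hl₁ hl₂
  have hrest : t₁ + t₂ < v (∑ x ∈ (antidiagonal (l₁ + l₂)).erase (l₁, l₂),
      (C ((taylor a h₁).coeff x.1) * (X - C a) ^ x.1) *
        (C ((taylor a h₂).coeff x.2) * (X - C a) ^ x.2)) := by
    refine v.map_lt_sum htop fun x hx => ?_
    obtain ⟨hne, hx⟩ := Finset.mem_erase.1 hx
    rw [mem_antidiagonal] at hx
    rw [v.map_mul]
    rcases lt_or_ge x.1 l₁ with h | h
    · exact WithTop.add_lt_add_of_lt_of_le ht₂ (hlt₁ _ h)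
        (trunc_X_sub_C_le_taylorTerm v a h₂ _)
    · have h2 : x.2 < l₂ := by
        by_contra h2
        exact hne (Prod.ext (by omega) (by omega))
      exact WithTop.add_lt_add_of_le_of_lt ht₁ (trunc_X_sub_C_le_taylorTerm v a h₁ _)
        (hlt₂ _ h2)
  refine le_antisymm ?_ hge
  calc trunc v (X - C a) (h₁ * h₂) ≤ taylorTerm v a (h₁ * h₂) (l₁ + l₂) :=
        trunc_X_sub_C_le_taylorTerm v a _ _
    _ = t₁ + t₂ := by
        rw [taylorTerm, C_taylor_mul_coeff_mul_pow, ← Finset.add_sum_erase _ _ hmem,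
          v.map_add_eq_of_lt_left (hmain ▸ hrest), hmain]

theorem trunc_X_sub_C_one : trunc v (X - C a) 1 = 0 := by
  simp [trunc, qCoeff_X_sub_C]

noncomputable def truncValuation : AddValuation K[X] (WithTop Γ) :=
  AddValuation.of (trunc v (X - C a)) (trunc_zero v _) (trunc_X_sub_C_one v a)
    (min_trunc_X_sub_C_le_add v a) (trunc_X_sub_C_mul v a)

theorem truncValuation_apply (h : K[X]) : truncValuation v a h = trunc v (X - C a) h := rfl

end TaylorTruncation

section TruncValuation

variable (v : AddValuation K[X] (WithTop Γ)) (a : K)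

theorem truncValuation_le (h : K[X]) : truncValuation v a h ≤ v h := by
  conv_rhs => rw [← sum_taylor_eq h a, Polynomial.sum]
  exact v.map_le_sum fun j _ => trunc_X_sub_C_le_taylorTerm v a h j

theorem truncValuation_C_mul_X_sub_C_pow (c : K) (n : ℕ) :
    truncValuation v a (C c * (X - C a) ^ n) = v (C c * (X - C a) ^ n) := by
  refine le_antisymm (truncValuation_le v a _) (le_trunc_X_sub_C v a fun j => ?_)
  have htaylor : taylor a (C c * (X - C a) ^ n) = C c * X ^ n := by
    simp [taylor_mul, taylor_pow, taylor_X, taylor_C]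
  rw [taylorTerm, htaylor, coeff_C_mul_X_pow]
  split_ifs with hj
  · rw [hj]
  · simp

theorem truncValuation_C (c : K) : truncValuation v a (C c) = v (C c) := by
  simpa using truncValuation_C_mul_X_sub_C_pow v a c 0

theorem truncValuation_X_sub_C (s : K) :
    truncValuation v a (X - C s) = min (v (X - C a)) (v (X - C s)) := by
  have hself : truncValuation v a (X - C a) = v (X - C a) := by
    simpa using truncValuation_C_mul_X_sub_C_pow v a 1 1
  have hsplit : X - C s = (X - C a) + C (a - s) := by rw [C_sub]; ring
  refine le_antisymm (le_min ?_ (truncValuation_le v a _)) ?_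
  · calc truncValuation v a (X - C s) ≤ taylorTerm v a (X - C s) 1 :=
          trunc_X_sub_C_le_taylorTerm v a _ 1
      _ = v (X - C a) := by simp [taylorTerm]
  · calc min (v (X - C a)) (v (X - C s))
        ≤ min (v (X - C a)) (v (C (a - s))) := by
          have hdiff : X - C s - (X - C a) = C (a - s) := by rw [C_sub]; ring
          exact le_min (min_le_left _ _) ((min_comm _ _).trans_le (hdiff ▸ v.map_sub _ _))
      _ = min (truncValuation v a (X - C a)) (truncValuation v a (C (a - s))) := by
          rw [hself, truncValuation_C]
      _ ≤ truncValuation v a (X - C s) := hsplit ▸ (truncValuation v a).map_add _ _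

theorem truncValuation_le_hasseDeriv_add (F : K[X]) (i : ℕ) :
    truncValuation v a F ≤ v (hasseDeriv i F) + i • v (X - C a) := by
  obtain ⟨k, hk⟩ := exists_taylorTerm_eq_trunc_X_sub_C v a (hasseDeriv i F)
  have hcoeff : (taylor a (hasseDeriv i F)).coeff k =
      ((k + i).choose k : K) * (taylor a F).coeff (k + i) := by
    rw [taylor_coeff, taylor_coeff, ← LinearMap.comp_apply, hasseDeriv_comp,
      LinearMap.smul_apply, eval_smul, nsmul_eq_mul]
  calc truncValuation v a F ≤ taylorTerm v a F (k + i) := trunc_X_sub_C_le_taylorTerm v a F _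
    _ = v (C ((taylor a F).coeff (k + i))) + k • v (X - C a) + i • v (X - C a) := by
        rw [taylorTerm, v.map_mul, v.map_pow, add_nsmul, add_assoc]
    _ ≤ v (((k + i).choose k : ℕ) : K[X]) + v (C ((taylor a F).coeff (k + i))) +
          k • v (X - C a) + i • v (X - C a) := by
        gcongr
        exact le_add_of_nonneg_left (v.map_natCast_nonneg _)
    _ = truncValuation v a (hasseDeriv i F) + i • v (X - C a) := by
        rw [truncValuation_apply, ← hk, taylorTerm, hcoeff, C_mul, C_eq_natCast, v.map_mul,
          v.map_mul, v.map_pow]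
    _ ≤ v (hasseDeriv i F) + i • v (X - C a) := by gcongr; exact truncValuation_le v a _

theorem truncValuation_ne_top (hγ : v (X - C a) ≠ ⊤) {F : K[X]} (hF : F ≠ 0) :
    truncValuation v a F ≠ ⊤ := by
  refine ne_top_of_le_ne_top ?_ (trunc_X_sub_C_le_taylorTerm v a F F.natDegree)
  rw [taylorTerm, coeff_taylor_natDegree, v.map_mul, v.map_pow]
  exact WithTop.add_ne_top.2
    ⟨v.map_ne_top_of_isUnit (isUnit_C.2 (leadingCoeff_ne_zero.2 hF).isUnit),
      WithTop.nsmul_ne_top hγ _⟩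

theorem truncValuation_eq_of_roots_le [IsAlgClosed K] {F : K[X]}
    (hroots : ∀ s ∈ F.roots, v (X - C s) ≤ v (X - C a)) : truncValuation v a F = v F := by
  rw [AddValuation.map_eq_add_sum_roots _ (IsAlgClosed.splits F),
    AddValuation.map_eq_add_sum_roots v (IsAlgClosed.splits F), truncValuation_C]
  congr 2
  exact Multiset.map_congr rfl fun s hs => by
    rw [truncValuation_X_sub_C, min_eq_right (hroots s hs)]

theorem valuation_C_eval_eq_of_roots_lt [IsAlgClosed K] {F : K[X]}
    (hroots : ∀ s ∈ F.roots, v (X - C s) < v (X - C a)) : v (C (F.eval a)) = v F := by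
  have hC : ∀ x, v (C x) = v.comap C x := fun _ => rfl
  rw [(IsAlgClosed.splits F).eval_eq_prod_roots,
    AddValuation.map_eq_add_sum_roots v (IsAlgClosed.splits F),
    hC, AddValuation.map_mul, AddValuation.map_multiset_prod_map, ← hC]
  congr 2
  refine Multiset.map_congr rfl fun s hs => ?_
  rw [← hC, show C (a - s) = (X - C s) - (X - C a) by rw [C_sub]; ring,
    v.map_sub_eq_of_lt_left (hroots s hs)]

theorem truncValuation_add_of_eval_eq_zero [IsAlgClosed K] {r P : K[X]}
    (hr : ∀ s ∈ r.roots, v (X - C s) < v (X - C a)) (hP : P.eval a = 0) :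
    truncValuation v a (r + P) = min (truncValuation v a r) (truncValuation v a P) := by
  refine le_antisymm ?_ ((truncValuation v a).map_add r P)
  rcases le_or_gt (truncValuation v a r) (truncValuation v a P) with hle | hlt
  · rw [min_eq_left hle]
    calc truncValuation v a (r + P) ≤ taylorTerm v a (r + P) 0 :=
          trunc_X_sub_C_le_taylorTerm v a _ 0
      _ = v (C (r.eval a)) := by simp [taylorTerm, hP]
      _ = truncValuation v a r := by
          rw [valuation_C_eval_eq_of_roots_lt v a hr,
            truncValuation_eq_of_roots_le v a fun s hs => (hr s hs).le]
  · rw [min_eq_right hlt.le, (truncValuation v a).map_add_eq_of_lt_right hlt]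

theorem valuation_hasseDeriv_mul_X_sub_C (hγ : v (X - C a) ≠ ⊤) {G : K[X]} (hG0 : G ≠ 0)
    {m : ℕ} (hG : v (hasseDeriv m G) + m • v (X - C a) = truncValuation v a G) {s : K}
    (hs : v (X - C s) < v (X - C a)) :
    v (hasseDeriv m (G * (X - C s))) + m • v (X - C a) = truncValuation v a (G * (X - C s)) := by
  rw [AddValuation.map_mul, truncValuation_X_sub_C, min_eq_right hs.le, ← hG]
  rcases m with _ | k
  · simp only [hasseDeriv_zero', zero_smul, add_zero, v.map_mul]
  · have hfin : v (hasseDeriv (k + 1) G) ≠ ⊤ := fun htop =>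
      truncValuation_ne_top v a hγ hG0 (by rw [← hG, htop, top_add])
    have hlt : v (hasseDeriv (k + 1) G * (X - C s)) < v (hasseDeriv k G) := by
      rw [v.map_mul]
      refine lt_of_add_lt_add_right (a := k • v (X - C a)) ?_
      calc v (hasseDeriv (k + 1) G) + v (X - C s) + k • v (X - C a)
          < v (hasseDeriv (k + 1) G) + v (X - C a) + k • v (X - C a) :=
            WithTop.add_lt_add_right (WithTop.nsmul_ne_top hγ k) (WithTop.add_lt_add_left hfin hs)
        _ = truncValuation v a G := by rw [← hG, succ_nsmul, add_assoc, add_comm (k • _)]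
        _ ≤ v (hasseDeriv k G) + k • v (X - C a) := truncValuation_le_hasseDeriv_add v a G k
    rw [hasseDeriv_succ_mul_X_sub_C, v.map_add_eq_of_lt_left hlt, v.map_mul, add_right_comm]

theorem valuation_hasseDeriv_card_add_nsmul (hγ : v (X - C a) ≠ ⊤) {c : K} (hc : c ≠ 0)
    {H S : Multiset K} (hH : ∀ s ∈ H, v (X - C a) ≤ v (X - C s))
    (hS : ∀ s ∈ S, v (X - C s) < v (X - C a)) :
    v (hasseDeriv (Multiset.card H) (C c * (H.map (X - C ·)).prod * (S.map (X - C ·)).prod)) +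
        Multiset.card H • v (X - C a) =
      truncValuation v a (C c * (H.map (X - C ·)).prod * (S.map (X - C ·)).prod) := by
  have hmonic : ∀ T : Multiset K, (T.map (X - C ·)).prod.Monic := fun T =>
    monic_multiset_prod_of_monic _ _ fun s _ => monic_X_sub_C s
  induction S using Multiset.induction_on with
  | empty =>
    have hdeg : (C c * (H.map (X - C ·)).prod).natDegree = Multiset.card H := by
      rw [natDegree_C_mul hc, natDegree_multiset_prod_X_sub_C_eq_card]
    have hlead : (C c * (H.map (X - C ·)).prod).leadingCoeff = c := by
      rw [leadingCoeff_mul, leadingCoeff_C, (hmonic H).leadingCoeff, mul_one]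
    rw [Multiset.map_zero, Multiset.prod_zero, mul_one, ← hdeg, hasseDeriv_natDegree_eq_C, hlead,
      hdeg, AddValuation.map_mul, truncValuation_C, AddValuation.map_multiset_prod_map,
      Multiset.map_congr rfl fun s hs =>
        (truncValuation_X_sub_C v a s).trans (min_eq_left (hH s hs)),
      Multiset.map_const', Multiset.sum_replicate]
  | cons s S ih =>
    have hG0 : C c * (H.map (X - C ·)).prod * (S.map (X - C ·)).prod ≠ 0 :=
      mul_ne_zero (mul_ne_zero (C_ne_zero.2 hc) (hmonic H).ne_zero) (hmonic S).ne_zero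
    rw [Multiset.map_cons, Multiset.prod_cons, mul_left_comm, mul_comm (X - C s)]
    exact valuation_hasseDeriv_mul_X_sub_C v a hγ hG0
      (ih fun t ht => hS t (Multiset.mem_cons_of_mem ht)) (hS s (Multiset.mem_cons_self s S))

end TruncValuation

theorem ratioLE_of_le_add {w : K[X] → WithTop Γ} {g f : K[X]} {b c : ℕ} {γ : WithTop Γ}
    (hf : w (hasseDeriv b f) + b • γ ≤ w f) (hg : w g ≤ w (hasseDeriv c g) + c • γ) :
    RatioLE w g c f b :=
  calc b • w g + c • w (hasseDeriv b f)
      ≤ b • (w (hasseDeriv c g) + c • γ) + c • w (hasseDeriv b f) := by gcongr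
    _ = b • w (hasseDeriv c g) + c • (w (hasseDeriv b f) + b • γ) := by
        rw [smul_add, smul_add, smul_smul, smul_smul, mul_comm]
        abel
    _ ≤ b • w (hasseDeriv c g) + c • w f := by gcongr
    _ = c • w f + b • w (hasseDeriv c g) := add_comm _ _

section KeyPolynomial

variable {L : Type*} [Field L] [Algebra K L] {ν : AddValuation K[X] (WithTop Γ)}
  {μ : AddValuation L[X] (WithTop Γ)}

theorem valuation_X_sub_C_ne_top (hKrull : ∀ p : K[X], p ≠ 0 → ν p ≠ ⊤)
    (hext : ∀ p : K[X], ν p = μ (p.map (algebraMap K L))) {a : L} (ha : IsIntegral K a) :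
    μ (X - C a) ≠ ⊤ := by
  obtain ⟨u, hu⟩ : X - C a ∣ (minpoly K a).map (algebraMap K L) := by
    rw [dvd_iff_isRoot, IsRoot, eval_map, ← aeval_def, minpoly.aeval]
  intro htop
  apply hKrull _ (minpoly.ne_zero ha)
  rw [hext, hu, μ.map_mul, htop, top_add]

variable [IsAlgClosed L] {Q : K[X]} {a : L}

theorem valuation_X_sub_C_lt_of_mem_roots (hKrull : ∀ p : K[X], p ≠ 0 → ν p ≠ ⊤)
    (hext : ∀ p : K[X], ν p = μ (p.map (algebraMap K L))) (hQ : IsKeyPoly ν Q)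
    (hγ : μ (X - C a) ≠ ⊤)
    (hQroots : ∀ s ∈ (Q.map (algebraMap K L)).roots, μ (X - C s) ≤ μ (X - C a))
    {h : K[X]} (hdeg : h.natDegree < Q.natDegree) {c : L}
    (hc : c ∈ (h.map (algebraMap K L)).roots) : μ (X - C c) < μ (X - C a) := by
  by_contra! hle
  set F := h.map (algebraMap K L)
  have hh : h ≠ 0 := by rintro rfl; simp [F] at hc
  set H := F.roots.filter fun s => μ (X - C a) ≤ μ (X - C s)
  set S := F.roots.filter fun s => ¬ μ (X - C a) ≤ μ (X - C s)
  have hF : F = C F.leadingCoeff * (H.map (X - C ·)).prod * (S.map (X - C ·)).prod := by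
    rw [mul_assoc, ← Multiset.prod_add, ← Multiset.map_add, Multiset.filter_add_not]
    exact (IsAlgClosed.splits F).eq_prod_roots
  have hm1 : 1 ≤ Multiset.card H :=
    Multiset.card_pos_iff_exists_mem.2 ⟨c, Multiset.mem_filter.2 ⟨hc, hle⟩⟩
  have hmdeg : Multiset.card H ≤ h.natDegree :=
    calc Multiset.card H ≤ Multiset.card F.roots := Multiset.card_le_card (Multiset.filter_le _ _)
      _ ≤ F.natDegree := card_roots' F
      _ = h.natDegree := natDegree_map _
  have hkey := valuation_hasseDeriv_card_add_nsmul μ a hγ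
    (leadingCoeff_ne_zero.2 ((Polynomial.map_ne_zero_iff (algebraMap K L).injective).2 hh))
    (H := H) (S := S) (fun s hs => (Multiset.mem_filter.1 hs).2)
    (fun s hs => not_le.1 (Multiset.mem_filter.1 hs).2)
  rw [← hF] at hkey
  have hdh : ν (hasseDeriv (Multiset.card H) h) + Multiset.card H • μ (X - C a) ≤ ν h := by
    rw [hext, hext, hasseDeriv_map, hkey]
    exact truncValuation_le μ a F
  have hdQ (i : ℕ) : ν Q ≤ ν (hasseDeriv i Q) + i • μ (X - C a) := by
    rw [hext, hext, hasseDeriv_map, ← truncValuation_eq_of_roots_le μ a hQroots]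
    exact truncValuation_le_hasseDeriv_add μ a _ i
  have hdh_ne_top : ν (hasseDeriv (Multiset.card H) h) ≠ ⊤ := fun htop =>
    hKrull h hh (top_le_iff.1 (by simpa [htop] using hdh))
  have heps : EpsGE ν h Q :=
    Or.inr ⟨fun hgen => hKrull Q hQ.1.ne_zero ((hgen Q).2 dvd_rfl),
      Or.inr ⟨_, ⟨hm1, hmdeg, hKrull h hh, hdh_ne_top⟩,
        fun i _ => ratioLE_of_le_add hdh (hdQ i)⟩⟩
  exact absurd (hQ.2 h hh heps) (not_le.2 hdeg)

theorem trunc_eq_truncValuation_map (hKrull : ∀ p : K[X], p ≠ 0 → ν p ≠ ⊤)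
    (hext : ∀ p : K[X], ν p = μ (p.map (algebraMap K L))) (hQ : IsKeyPoly ν Q)
    (hγ : μ (X - C a) ≠ ⊤)
    (hQroots : ∀ s ∈ (Q.map (algebraMap K L)).roots, μ (X - C s) ≤ μ (X - C a))
    (hQ1 : 1 ≤ Q.natDegree)
    (ha : aeval a Q = 0) (f : K[X]) :
    trunc ν Q f = truncValuation μ a (f.map (algebraMap K L)) := by
  induction hn : f.natDegree using Nat.strong_induction_on generalizing f with
  | _ n ih =>
    have hr : ∀ s ∈ ((f %ₘ Q).map (algebraMap K L)).roots, μ (X - C s) < μ (X - C a) :=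
      fun s => valuation_X_sub_C_lt_of_mem_roots hKrull hext hQ hγ hQroots
        (natDegree_modByMonic_lt f hQ.1 (by rintro rfl; simp at hQ1))
    have hg : trunc ν Q (f /ₘ Q) = truncValuation μ a ((f /ₘ Q).map (algebraMap K L)) := by
      rcases eq_or_ne (f /ₘ Q) 0 with hg0 | hg0
      · rw [hg0, trunc_zero, Polynomial.map_zero, AddValuation.map_zero]
      · have hf0 : f ≠ 0 := by rintro rfl; simp at hg0
        refine ih _ (hn ▸ natDegree_lt_natDegree hg0 (degree_divByMonic_lt f Q hf0 ?_)) _ rfl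
        rw [degree_eq_natDegree hQ.1.ne_zero]
        exact_mod_cast hQ1
    have hQa : ((Q.map (algebraMap K L)) * (f /ₘ Q).map (algebraMap K L)).eval a = 0 := by
      rw [eval_mul, eval_map, ← aeval_def, ha, zero_mul]
    calc trunc ν Q f = min (ν (f %ₘ Q)) (trunc ν Q (f /ₘ Q) + ν Q) :=
          trunc_eq_min ν hQ.1 hQ1 f
      _ = min (truncValuation μ a ((f %ₘ Q).map (algebraMap K L)))
            (truncValuation μ a (Q.map (algebraMap K L) * (f /ₘ Q).map (algebraMap K L))) := by
          rw [hext, hext Q, hg, AddValuation.map_mul, truncValuation_eq_of_roots_le μ a hQroots,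
            add_comm, truncValuation_eq_of_roots_le μ a fun s hs => (hr s hs).le]
      _ = truncValuation μ a (f.map (algebraMap K L)) := by
          rw [← truncValuation_add_of_eval_eq_zero μ a hr hQa, ← Polynomial.map_mul,
            ← Polynomial.map_add, modByMonic_add_div]

end KeyPolynomial

/-- For a key polynomial `Q` of `ν` and an optimizing root `a` of `Q`,
the restriction of `μ_{x-a}` to `K[x]` is the truncation `ν_Q`. -/
theorem stmt19 {L : Type*} [Field L] [Algebra K L] [IsAlgClosure K L]
    (ν : AddValuation (Polynomial K) (WithTop Γ)) (μ : AddValuation (Polynomial L) (WithTop Γ))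
    (hKrull : ∀ p : Polynomial K, p ≠ 0 → ν p ≠ ⊤)
    (hext : ∀ p : Polynomial K, ν p = μ (p.map (algebraMap K L)))
    (Q : Polynomial K) (hQ : IsKeyPoly (⇑ν) Q)
    (a : L) (ha : Polynomial.aeval a Q = 0)
    (hopt : ∀ b : L, Polynomial.aeval b Q = 0 → μ (X - C b) ≤ μ (X - C a)) :
    ∀ f : Polynomial K,
      trunc (⇑ν) Q f = trunc (⇑μ) (X - C a) (f.map (algebraMap K L)) := by
  have : IsAlgClosed L := IsAlgClosure.isAlgClosed K
  have hQ1 : 1 ≤ Q.natDegree := natDegree_pos_of_monic_of_aeval_eq_zero hQ.1 ha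
  have hγ := valuation_X_sub_C_ne_top hKrull hext (Algebra.IsIntegral.isIntegral (R := K) a)
  have hQroots : ∀ s ∈ (Q.map (algebraMap K L)).roots, μ (X - C s) ≤ μ (X - C a) :=
    fun s hs => hopt s (by rwa [mem_roots_map hQ.1.ne_zero, ← aeval_def] at hs)
  exact trunc_eq_truncValuation_map hKrull hext hQ hγ hQroots hQ1 ha
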